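/- arXiv:2501.11055 — 5 statements merged into one kernel-verified Lean document; each statement's English description precedes it below -/
import Mathlib

section
/- Let R = ℂ[x₁,x₂,x₃,u₀,u₁,u₂] and let I_A ⊂ R be the ideal generated by x₁u₁−x₂u₀, x₁u₂−x₂u₁, x₁²−x₃u₀, x₁x₂−x₃u₁, x₂²−x₃u₂. Then I_A is a radical ideal; equivalently, the quotient ring A = R/I_A is reduced. -/
open MvPolynomial

/-- The ideal `I_A = (x₁u₁−x₂u₀, x₁u₂−x₂u₁, x₁²−x₃u₀, x₁x₂−x₃u₁, x₂²−x₃u₂)` of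
`R = ℂ[x₁,x₂,x₃,u₀,u₁,u₂]`. Variables: `x₁ = X 0`, `x₂ = X 1`, `x₃ = X 2`,
`u₀ = X 3`, `u₁ = X 4`, `u₂ = X 5`. -/
noncomputable def IA : Ideal (MvPolynomial (Fin 6) ℂ) :=
  Ideal.span {X 0 * X 4 - X 1 * X 3, X 0 * X 5 - X 1 * X 4,
    X 0 ^ 2 - X 2 * X 3, X 0 * X 1 - X 2 * X 4, X 1 ^ 2 - X 2 * X 5}

/-!
`I_A` is the intersection of two primes: the kernel of the Veronese parametrisation
`(x₁,x₂,x₃,u₀,u₁,u₂) ↦ (ac, bc, c², a², ab, b²)` into `ℂ[a,b,c]` (the blow-up component) and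
`(x₁, x₂, x₃)` (the projective-space component); an intersection of primes is radical.

Only `⊇` needs work. Modulo `I_A` every polynomial reduces to
`g₀(u) + x₃ h₁ + x₃u₁ h₂ + x₁ h₃ + x₂ h₄` with `g₀ ∈ ℂ[u₀,u₁,u₂]` and `hᵢ ∈ ℂ[u₀,u₂,x₃]`.
Setting `x = 0` recovers `g₀`, and the Veronese map sends the rest to
`c² H₁ + abc² H₂ + ac H₃ + bc H₄` with `Hᵢ = hᵢ(a², b², c²)`; the four summands have different
parities in `(a, b)`, so the sign changes `a ↦ ±a`, `b ↦ ±b` separate them.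
-/

theorem MvPolynomial.aeval_expand_of_pow_eq {σ R : Type*} [CommSemiring R] {n : ℕ}
    {g : σ → MvPolynomial σ R} (hg : ∀ i, g i ^ n = X i ^ n) (p : MvPolynomial σ R) :
    aeval g (expand n p) = expand n p := by
  induction p using MvPolynomial.induction_on with
  | C a => rw [expand_C, aeval_C, algebraMap_eq]
  | add p q hp hq => rw [map_add, map_add, hp, hq]
  | mul_X p i hp => rw [map_mul, map_mul, hp, expand_X, map_pow, aeval_X, hg]

noncomputable section

local notation "R₆" => MvPolynomial (Fin 6) ℂ
local notation "S₃" => MvPolynomial (Fin 3) ℂ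

namespace IA

theorem mem_of_eq_combination {f : R₆} (c₁ c₂ c₃ c₄ c₅ : R₆)
    (h : f = c₁ * (X 0 * X 4 - X 1 * X 3) + c₂ * (X 0 * X 5 - X 1 * X 4) +
      c₃ * (X 0 ^ 2 - X 2 * X 3) + c₄ * (X 0 * X 1 - X 2 * X 4) + c₅ * (X 1 ^ 2 - X 2 * X 5)) :
    f ∈ IA := by
  have gen {g : R₆} (hg : g ∈ ({X 0 * X 4 - X 1 * X 3, X 0 * X 5 - X 1 * X 4,
      X 0 ^ 2 - X 2 * X 3, X 0 * X 1 - X 2 * X 4, X 1 ^ 2 - X 2 * X 5} : Set R₆)) (c : R₆) :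
      c * g ∈ IA :=
    IA.mul_mem_left c (Ideal.subset_span hg)
  subst h
  refine IA.add_mem (IA.add_mem (IA.add_mem (IA.add_mem ?_ ?_) ?_) ?_) ?_ <;>
    exact gen (by simp) _

/-- Polynomials in `u₀, u₁, u₂`. -/
def inclU : S₃ →ₐ[ℂ] R₆ := aeval ![X 3, X 4, X 5]

/-- Polynomials in `u₀, u₂, x₃`. -/
def inclA : S₃ →ₐ[ℂ] R₆ := aeval ![X 3, X 5, X 2]

def normalForm (p₀ p₁ p₂ q r : S₃) : R₆ :=
  inclU p₀ + X 2 * inclA p₁ + X 2 * X 4 * inclA p₂ + X 0 * inclA q + X 1 * inclA r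

def HasNormalForm (f : R₆) : Prop :=
  ∃ p₀ p₁ p₂ q r : S₃, f - normalForm p₀ p₁ p₂ q r ∈ IA

section NormalForm

variable {f g : R₆} (p₀ p₁ p₂ q r : S₃)

theorem hasNormalForm_normalForm : HasNormalForm (normalForm p₀ p₁ p₂ q r) :=
  ⟨p₀, p₁, p₂, q, r, by simp⟩

theorem HasNormalForm.of_sub_mem (hg : HasNormalForm g) (h : f - g ∈ IA) : HasNormalForm f := by
  obtain ⟨p₀, p₁, p₂, q, r, hg⟩ := hg
  exact ⟨p₀, p₁, p₂, q, r, by simpa using IA.add_mem h hg⟩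

theorem HasNormalForm.add (hf : HasNormalForm f) (hg : HasNormalForm g) :
    HasNormalForm (f + g) := by
  obtain ⟨a₀, a₁, a₂, a₃, a₄, ha⟩ := hf
  obtain ⟨b₀, b₁, b₂, b₃, b₄, hb⟩ := hg
  refine ⟨a₀ + b₀, a₁ + b₁, a₂ + b₂, a₃ + b₃, a₄ + b₄, ?_⟩
  convert IA.add_mem ha hb using 1
  simp only [normalForm, map_add]
  ring

theorem HasNormalForm.mul (hf : HasNormalForm f)
    (hg : ∀ p₀ p₁ p₂ q r, HasNormalForm (normalForm p₀ p₁ p₂ q r * g)) :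
    HasNormalForm (f * g) := by
  obtain ⟨p₀, p₁, p₂, q, r, hf⟩ := hf
  exact (hg p₀ p₁ p₂ q r).of_sub_mem (by rw [← sub_mul]; exact IA.mul_mem_right g hf)

theorem hasNormalForm_normalForm_mul_C (a : ℂ) :
    HasNormalForm (normalForm p₀ p₁ p₂ q r * C a) :=
  ⟨p₀ * C a, p₁ * C a, p₂ * C a, q * C a, r * C a,
    mem_of_eq_combination 0 0 0 0 0 (by simp [normalForm, inclU, inclA, algebraMap_eq]; ring)⟩

theorem hasNormalForm_normalForm_mul_X3 : HasNormalForm (normalForm p₀ p₁ p₂ q r * X 3) :=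
  ⟨p₀ * X 0, p₁ * X 0, p₂ * X 0, q * X 0, r * X 0,
    mem_of_eq_combination 0 0 0 0 0 (by simp [normalForm, inclU, inclA]; ring)⟩

theorem hasNormalForm_normalForm_mul_X4 : HasNormalForm (normalForm p₀ p₁ p₂ q r * X 4) :=
  ⟨p₀ * X 1, p₂ * X 0 * X 1, p₁, r * X 1, q * X 0,
    mem_of_eq_combination (inclA q) (-inclA r - X 0 * inclA p₂) (X 5 * inclA p₂) (-X 4 * inclA p₂) 0
      (by simp [normalForm, inclU, inclA]; ring)⟩

theorem hasNormalForm_normalForm_mul_X5 : HasNormalForm (normalForm p₀ p₁ p₂ q r * X 5) :=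
  ⟨p₀ * X 2, p₁ * X 1, p₂ * X 1, q * X 1, r * X 1,
    mem_of_eq_combination 0 0 0 0 0 (by simp [normalForm, inclU, inclA]; ring)⟩

theorem HasNormalForm.mul_inclU (hf : HasNormalForm f) (p : S₃) :
    HasNormalForm (f * inclU p) := by
  induction p using MvPolynomial.induction_on with
  | C a => simpa [inclU, algebraMap_eq] using hf.mul (hasNormalForm_normalForm_mul_C · · · · · a)
  | add p p' hp hp' => rw [map_add, mul_add]; exact hp.add hp'
  | mul_X p j hp =>
    rw [map_mul, ← mul_assoc]
    fin_cases j
    · simpa [inclU] using hp.mul hasNormalForm_normalForm_mul_X3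
    · simpa [inclU] using hp.mul hasNormalForm_normalForm_mul_X4
    · simpa [inclU] using hp.mul hasNormalForm_normalForm_mul_X5

theorem hasNormalForm_normalForm_mul_X0 : HasNormalForm (normalForm p₀ p₁ p₂ q r * X 0) :=
  ((HasNormalForm.mul_inclU (f := X 0) ⟨0, 0, 0, 1, 0, by simp [normalForm]⟩ p₀).add
    (hasNormalForm_normalForm 0 (q * X 0) r (p₁ * X 2) (p₂ * X 2 * X 0))).of_sub_mem
    (mem_of_eq_combination (X 2 * inclA p₂) 0 (inclA q) (inclA r) 0 (by simp [normalForm, inclA]; ring))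

theorem hasNormalForm_normalForm_mul_X1 : HasNormalForm (normalForm p₀ p₁ p₂ q r * X 1) :=
  ((HasNormalForm.mul_inclU (f := X 1) ⟨0, 0, 0, 0, 1, by simp [normalForm]⟩ p₀).add
    (hasNormalForm_normalForm 0 (r * X 1) q (p₂ * X 2 * X 1) (p₁ * X 2))).of_sub_mem
    (mem_of_eq_combination 0 (-X 2 * inclA p₂) 0 (inclA q) (inclA r) (by simp [normalForm, inclA]; ring))

theorem hasNormalForm_normalForm_mul_X2 : HasNormalForm (normalForm p₀ p₁ p₂ q r * X 2) :=
  ((HasNormalForm.mul_inclU (f := X 2) ⟨0, 1, 0, 0, 0, by simp [normalForm]⟩ p₀).add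
    (hasNormalForm_normalForm 0 (p₁ * X 2) (p₂ * X 2) (q * X 2) (r * X 2))).of_sub_mem
    (mem_of_eq_combination 0 0 0 0 0 (by simp [normalForm, inclA]; ring))

theorem hasNormalForm (f : R₆) : HasNormalForm f := by
  induction f using MvPolynomial.induction_on with
  | C a => exact ⟨C a, 0, 0, 0, 0, by simp [normalForm, inclU, algebraMap_eq]⟩
  | add f g hf hg => exact hf.add hg
  | mul_X f j hf =>
    fin_cases j
    · exact hf.mul hasNormalForm_normalForm_mul_X0
    · exact hf.mul hasNormalForm_normalForm_mul_X1
    · exact hf.mul hasNormalForm_normalForm_mul_X2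
    · exact hf.mul hasNormalForm_normalForm_mul_X3
    · exact hf.mul hasNormalForm_normalForm_mul_X4
    · exact hf.mul hasNormalForm_normalForm_mul_X5

end NormalForm

def veronese : R₆ →ₐ[ℂ] S₃ :=
  aeval ![X 0 * X 2, X 1 * X 2, X 2 ^ 2, X 0 ^ 2, X 0 * X 1, X 1 ^ 2]

def projU : R₆ →ₐ[ℂ] S₃ := aeval ![0, 0, 0, X 0, X 1, X 2]

theorem le_ker_of_generators {φ : R₆ →ₐ[ℂ] S₃} (h₁ : φ (X 0 * X 4 - X 1 * X 3) = 0)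
    (h₂ : φ (X 0 * X 5 - X 1 * X 4) = 0) (h₃ : φ (X 0 ^ 2 - X 2 * X 3) = 0)
    (h₄ : φ (X 0 * X 1 - X 2 * X 4) = 0) (h₅ : φ (X 1 ^ 2 - X 2 * X 5) = 0) :
    IA ≤ RingHom.ker φ := by
  rw [IA, Ideal.span_le]
  rintro g (rfl | rfl | rfl | rfl | rfl) <;> assumption

theorem le_ker_veronese : IA ≤ RingHom.ker veronese :=
  le_ker_of_generators (by simp [veronese]; ring) (by simp [veronese]; ring)
    (by simp [veronese]; ring) (by simp [veronese]; ring) (by simp [veronese]; ring)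

theorem le_ker_projU : IA ≤ RingHom.ker projU :=
  le_ker_of_generators (by simp [projU]) (by simp [projU]) (by simp [projU]) (by simp [projU])
    (by simp [projU])

theorem veronese_inclA (p : S₃) : veronese (inclA p) = expand 2 p := by
  rw [← AlgHom.comp_apply]
  congr 1
  ext i
  fin_cases i <;> simp [veronese, inclA]

theorem projU_inclU (p : S₃) : projU (inclU p) = p := by
  rw [← AlgHom.comp_apply, ← AlgHom.id_apply (R := ℂ) p]
  congr 1
  ext i
  fin_cases i <;> simp [projU, inclU]

theorem projU_normalForm (p₀ p₁ p₂ q r : S₃) : projU (normalForm p₀ p₁ p₂ q r) = p₀ := by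
  simp only [normalForm, map_add, map_mul, projU_inclU]
  simp [projU]

theorem veronese_normalForm_zero (p₁ p₂ q r : S₃) :
    veronese (normalForm 0 p₁ p₂ q r) = X 2 ^ 2 * expand 2 p₁ +
      X 0 * X 1 * X 2 ^ 2 * expand 2 p₂ + X 0 * X 2 * expand 2 q + X 1 * X 2 * expand 2 r := by
  simp only [normalForm, map_add, map_mul, map_zero, veronese_inclA]
  simp only [veronese, aeval_X, Matrix.cons_val, Matrix.cons_val_zero, Matrix.cons_val_one,
    zero_add]
  ring

theorem normalForm_eq_zero {p₀ p₁ p₂ q r : S₃} (hv : veronese (normalForm p₀ p₁ p₂ q r) = 0)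
    (hu : projU (normalForm p₀ p₁ p₂ q r) = 0) : normalForm p₀ p₁ p₂ q r = 0 := by
  obtain rfl : p₀ = 0 := by rwa [projU_normalForm] at hu
  rw [veronese_normalForm_zero] at hv
  -- `a ↦ ±a`, `b ↦ ±b` fix every `expand 2 p`.
  have hsign (a b : S₃) (ha : a ^ 2 = X 0 ^ 2) (hb : b ^ 2 = X 1 ^ 2) :
      X 2 ^ 2 * expand 2 p₁ + a * b * X 2 ^ 2 * expand 2 p₂ + a * X 2 * expand 2 q +
        b * X 2 * expand 2 r = 0 := by
    have hfix : ∀ i, ![a, b, X 2] i ^ 2 = X i ^ 2 := by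
      intro i
      fin_cases i <;> simp [ha, hb]
    simpa only [map_add, map_mul, map_pow, map_zero, aeval_expand_of_pow_eq hfix, aeval_X,
      Matrix.cons_val, Matrix.cons_val_zero, Matrix.cons_val_one] using
      congrArg (aeval ![a, b, X 2]) hv
  have e₁ := hsign (X 0) (X 1) rfl rfl
  have e₂ := hsign (-X 0) (X 1) (neg_sq _) rfl
  have e₃ := hsign (X 0) (-X 1) rfl (neg_sq _)
  have e₄ := hsign (-X 0) (-X 1) (neg_sq _) (neg_sq _)
  have h₁ : 4 * (X 2 ^ 2 * expand 2 p₁) = 0 := by linear_combination e₁ + e₂ + e₃ + e₄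
  have h₂ : 4 * (X 0 * X 1 * X 2 ^ 2 * expand 2 p₂) = 0 := by
    linear_combination e₁ - e₂ - e₃ + e₄
  have h₃ : 4 * (X 0 * X 2 * expand 2 q) = 0 := by linear_combination e₁ - e₂ + e₃ - e₄
  have h₄ : 4 * (X 1 * X 2 * expand 2 r) = 0 := by linear_combination e₁ + e₂ - e₃ - e₄
  simp only [mul_eq_zero, OfNat.ofNat_ne_zero, ne_eq, not_false_eq_true, pow_eq_zero_iff,
    X_ne_zero, Order.lt_two_iff, zero_le, expand_eq_zero, false_or, or_self] at h₁ h₂ h₃ h₄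
  simp [normalForm, h₁, h₂, h₃, h₄]

theorem eq_ker_veronese_inf_ker_projU : IA = RingHom.ker veronese ⊓ RingHom.ker projU := by
  refine le_antisymm (le_inf le_ker_veronese le_ker_projU) fun f hf => ?_
  obtain ⟨p₀, p₁, p₂, q, r, hN⟩ := hasNormalForm f
  have hN' : normalForm p₀ p₁ p₂ q r ∈ RingHom.ker veronese ⊓ RingHom.ker projU := by
    simpa using Ideal.sub_mem _ hf (le_inf le_ker_veronese le_ker_projU hN)
  simpa [normalForm_eq_zero hN'.1 hN'.2] using hN

end IA

end

/-- `I_A` is a radical ideal; equivalently, `A = R/I_A` is reduced. -/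
theorem stmt4 : IA.IsRadical ∧ IsReduced (MvPolynomial (Fin 6) ℂ ⧸ IA) := by
  have hrad : IA.IsRadical := by
    rw [IA.eq_ker_veronese_inf_ker_projU]
    exact (RingHom.ker_isPrime _).isRadical.inf (RingHom.ker_isPrime _).isRadical
  exact ⟨hrad, (Ideal.isRadical_iff_quotient_reduced IA).mp hrad⟩
end

section
/- Let R = ℂ[x₁,x₂,x₃,u₀,u₁,u₂] and let I_A ⊂ R be the ideal generated by x₁u₁−x₂u₀, x₁u₂−x₂u₁, x₁²−x₃u₀, x₁x₂−x₃u₁, x₂²−x₃u₂. Then the prime ideals of R that are minimal over I_A are exactly the two ideals P = (x₁, x₂, x₃) and I_B = I_A + (u₀u₂−u₁²); in particular, the quotient A = R/I_A has exactly two minimal primes. -/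
/-!
Every prime containing `I_A` contains `P = (x₁, x₂, x₃)` or `I_B`, because `xᵢ (u₀u₂ − u₁²) ∈ I_A`
for `i = 1, 2, 3`. The ideal `P` is prime since `R ⧸ P` is a polynomial ring. The ideal `I_B` is
generated by the `2 × 2` minors of the symmetric matrix `[[u₀, u₁, x₁], [u₁, u₂, x₂], [x₁, x₂, x₃]]`
and is the kernel of the Veronese map `R → ℂ[s, t, w]`, `x₁ ↦ sw, x₂ ↦ tw, x₃ ↦ w², u₀ ↦ s²,
u₁ ↦ st, u₂ ↦ t²`, hence prime: read as rewriting rules on monomials, the six minors bring every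
monomial modulo `I_B` to a normal one, and distinct normal monomials have distinct images.
Finally `P` and `I_B` are incomparable: `u₀u₂ − u₁² ∉ P` and `x₃ ∉ I_B`.
-/

open MvPolynomial

namespace MvPolynomial

variable {R σ τ : Type*} [CommRing R]

lemma monomial_sub_monomial_tsub_add_mem {I : Ideal (MvPolynomial σ R)} {α β m : σ →₀ ℕ}
    (h : monomial α 1 - monomial β 1 ∈ I) (hα : α ≤ m) :
    monomial m 1 - monomial (m - α + β) 1 ∈ I := by
  have : monomial m (1 : R) - monomial (m - α + β) 1 =
      monomial (m - α) 1 * (monomial α 1 - monomial β 1) := by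
    rw [mul_sub, monomial_mul, monomial_mul, tsub_add_cancel_of_le hα, mul_one]
  exact this ▸ I.mul_mem_left _ h

lemma exists_normal_monomial_of_reduction {I : Ideal (MvPolynomial σ R)} {N : Set (σ →₀ ℕ)}
    (μ : (σ →₀ ℕ) → ℕ)
    (hreduce : ∀ m ∉ N, ∃ m', monomial m 1 - monomial m' 1 ∈ I ∧ μ m' < μ m)
    (m : σ →₀ ℕ) : ∃ n ∈ N, monomial m 1 - monomial n 1 ∈ I := by
  induction hμ : μ m using Nat.strong_induction_on generalizing m with
  | _ k ih =>
    by_cases hm : m ∈ N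
    · exact ⟨m, hm, by simp⟩
    obtain ⟨m', hm'I, hlt⟩ := hreduce m hm
    obtain ⟨n, hn, hnI⟩ := ih _ (hμ ▸ hlt) m' rfl
    exact ⟨n, hn, by simpa using add_mem hm'I hnI⟩

lemma exists_support_subset_sub_mem {I : Ideal (MvPolynomial σ R)} {N : Set (σ →₀ ℕ)}
    (hnormal : ∀ m, ∃ n ∈ N, monomial m 1 - monomial n 1 ∈ I) (p : MvPolynomial σ R) :
    ∃ q : MvPolynomial σ R, ↑q.support ⊆ N ∧ p - q ∈ I := by
  choose ν hνN hνI using hnormal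
  classical
  refine ⟨∑ m ∈ p.support, monomial (ν m) (p.coeff m), fun n hn => ?_, ?_⟩
  · obtain ⟨m, -, hm⟩ := Finset.mem_biUnion.mp (support_sum (Finset.mem_coe.mp hn))
    rw [Finset.mem_singleton.mp (support_monomial_subset hm)]
    exact hνN m
  · nth_rewrite 1 [p.as_sum]
    rw [← Finset.sum_sub_distrib]
    refine I.sum_mem fun m _ => ?_
    rw [← mul_one (p.coeff m), ← C_mul_monomial, ← C_mul_monomial, ← mul_sub]
    exact I.mul_mem_left _ (hνI m)

lemma aeval_monomial_monomial (v : σ → τ →₀ ℕ) (m : σ →₀ ℕ) (c : R) :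
    aeval (fun i => monomial (v i) (1 : R)) (monomial m c) =
      monomial (Finsupp.linearCombination ℕ v m) c := by
  rw [aeval_monomial, Finsupp.linearCombination_apply, monomial_finsupp_sum_index,
    algebraMap_eq]
  simp [monomial_pow]

lemma eq_zero_of_aeval_monomial_eq_zero {v : σ → τ →₀ ℕ} {N : Set (σ →₀ ℕ)}
    (hN : N.InjOn (Finsupp.linearCombination ℕ v)) {q : MvPolynomial σ R}
    (hq : ↑q.support ⊆ N) (h : aeval (fun i => monomial (v i) (1 : R)) q = 0) : q = 0 := by
  classical
  ext n
  by_contra hn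
  have hnq : n ∈ q.support := mem_support_iff.mpr hn
  have hcoeff := congrArg (coeff (Finsupp.linearCombination ℕ v n)) h
  nth_rewrite 1 [q.as_sum] at hcoeff
  simp only [map_sum, aeval_monomial_monomial, coeff_sum, coeff_monomial, coeff_zero] at hcoeff
  rw [Finset.sum_eq_single n (fun m hm hmn => if_neg fun he => hmn (hN (hq hm) (hq hnq) he))
    (fun h => absurd hnq h), if_pos rfl] at hcoeff
  exact hn hcoeff

theorem ker_aeval_monomial_eq {v : σ → τ →₀ ℕ} {I : Ideal (MvPolynomial σ R)}
    {N : Set (σ →₀ ℕ)} (hI : I ≤ RingHom.ker (aeval fun i => monomial (v i) (1 : R)))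
    (hN : N.InjOn (Finsupp.linearCombination ℕ v))
    (hnormal : ∀ m, ∃ n ∈ N, monomial m 1 - monomial n 1 ∈ I) :
    RingHom.ker (aeval fun i => monomial (v i) (1 : R)) = I := by
  refine le_antisymm (fun p hp => ?_) hI
  obtain ⟨q, hqN, hpq⟩ := exists_support_subset_sub_mem hnormal p
  have hq : aeval (fun i => monomial (v i) (1 : R)) q = 0 := by
    have := RingHom.mem_ker.mp (hI hpq)
    rwa [map_sub, RingHom.mem_ker.mp hp, zero_sub, neg_eq_zero] at this
  simpa [eq_zero_of_aeval_monomial_eq_zero hN hqN hq] using hpq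

lemma ker_killCompl_subtype_val (S : Set σ) :
    RingHom.ker
        (killCompl (R := R) (Subtype.val_injective : Function.Injective ((↑) : ↥Sᶜ → σ))) =
      Ideal.span (X '' S) := by
  ext p
  rw [RingHom.mem_ker, mem_ideal_span_X_image]
  constructor
  · intro h m hm
    by_contra! hmS
    have hsub : ↑m.support ⊆ Set.range ((↑) : ↥Sᶜ → σ) := fun i hi =>
      ⟨⟨i, fun hiS => Finsupp.mem_support_iff.mp hi (hmS i hiS)⟩, rfl⟩
    have := congrArg (coeff (m.comapDomain _ Subtype.val_injective.injOn)) h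
    rw [coeff_killCompl, Finsupp.mapDomain_comapDomain _ Subtype.val_injective _ hsub,
      coeff_zero] at this
    exact mem_support_iff.mp hm this
  · intro h
    ext s
    rw [coeff_killCompl, coeff_zero]
    by_contra hs
    obtain ⟨i, hiS, hi⟩ := h _ (mem_support_iff.mpr hs)
    exact hi (Finsupp.mapDomain_of_notMem_range _ _ fun ⟨j, hj⟩ => j.2 (hj ▸ hiS))

theorem isPrime_span_X_image [IsDomain R] (S : Set σ) :
    (Ideal.span (X '' S : Set (MvPolynomial σ R))).IsPrime :=
  ker_killCompl_subtype_val (R := R) S ▸ RingHom.ker_isPrime _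

end MvPolynomial

theorem Ideal.minimalPrimes_eq_pair {A : Type*} [CommSemiring A] {I P Q : Ideal A}
    (hP : P.IsPrime) (hQ : Q.IsPrime) (hIP : I ≤ P) (hIQ : I ≤ Q) (hPQ : ¬P ≤ Q)
    (hQP : ¬Q ≤ P) (hcover : ∀ p : Ideal A, p.IsPrime → I ≤ p → P ≤ p ∨ Q ≤ p) :
    I.minimalPrimes = {P, Q} := by
  ext p
  constructor
  · intro hp
    rcases hcover p hp.1.1 hp.1.2 with h | h
    · exact Or.inl (le_antisymm (hp.2 ⟨hP, hIP⟩ h) h)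
    · exact Or.inr (le_antisymm (hp.2 ⟨hQ, hIQ⟩ h) h)
  · rintro (rfl | rfl)
    · refine ⟨⟨hP, hIP⟩, fun q hq hqp => ?_⟩
      exact (hcover q hq.1 hq.2).resolve_right fun h => hQP (h.trans hqp)
    · refine ⟨⟨hQ, hIQ⟩, fun q hq hqp => ?_⟩
      exact (hcover q hq.1 hq.2).resolve_left fun h => hPQ (h.trans hqp)

lemma generators_subset_IA :
    ({X 0 * X 4 - X 1 * X 3, X 0 * X 5 - X 1 * X 4, X 0 ^ 2 - X 2 * X 3,
      X 0 * X 1 - X 2 * X 4, X 1 ^ 2 - X 2 * X 5} : Set (MvPolynomial (Fin 6) ℂ)) ⊆ IA :=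
  Ideal.subset_span

noncomputable def IP : Ideal (MvPolynomial (Fin 6) ℂ) :=
  Ideal.span {X 0, X 1, X 2}

noncomputable def IB : Ideal (MvPolynomial (Fin 6) ℂ) :=
  IA ⊔ Ideal.span {X 3 * X 5 - X 4 ^ 2}

lemma IA_le_IB : IA ≤ IB := le_sup_left

lemma minor_mem_IB : X 3 * X 5 - X 4 ^ 2 ∈ IB := Ideal.mem_sup_right (Ideal.subset_span rfl)

lemma isPrime_IP : IP.IsPrime := by
  simpa [IP, Set.image_insert_eq] using isPrime_span_X_image (R := ℂ) ({0, 1, 2} : Set (Fin 6))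

lemma IA_le_IP : IA ≤ IP := by
  have h0 : X 0 ∈ IP := Ideal.subset_span (by simp)
  have h1 : X 1 ∈ IP := Ideal.subset_span (by simp)
  have h2 : X 2 ∈ IP := Ideal.subset_span (by simp)
  rw [IA, Ideal.span_le]
  rintro _ (rfl | rfl | rfl | rfl | rfl) <;>
    simp [sq, Ideal.mul_mem_right, Ideal.sub_mem, h0, h1, h2]

lemma minor_notMem_IP : X 3 * X 5 - X 4 ^ 2 ∉ IP := by
  have hle : IP ≤ RingHom.ker (eval ![0, 0, 0, 0, 1, 0] : MvPolynomial (Fin 6) ℂ →+* ℂ) := by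
    rw [IP, Ideal.span_le]
    rintro _ (rfl | rfl | rfl) <;> simp
  exact fun h => by simpa using hle h

open Finsupp in
/-- The exponent of the image of each variable under the Veronese map, with `s, t, w` numbered
`0, 1, 2`. -/
noncomputable def veroneseExponent : Fin 6 → Fin 3 →₀ ℕ :=
  ![single 0 1 + single 2 1, single 1 1 + single 2 1, single 2 2, single 0 2,
    single 0 1 + single 1 1, single 1 2]

noncomputable abbrev veroneseMap : MvPolynomial (Fin 6) ℂ →ₐ[ℂ] MvPolynomial (Fin 3) ℂ :=
  aeval fun i => monomial (veroneseExponent i) 1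

lemma IB_le_ker_veroneseMap : IB ≤ RingHom.ker veroneseMap := by
  rw [IB, IA, sup_le_iff, Ideal.span_le, Ideal.span_le]
  constructor
  all_goals
    rintro _ (rfl | rfl | rfl | rfl | rfl) <;>
    · simp only [SetLike.mem_coe, RingHom.mem_ker, map_sub, map_mul, map_pow, aeval_X,
        monomial_mul, monomial_pow, one_pow, mul_one, sub_eq_zero, monomial_left_inj one_ne_zero]
      ext j; fin_cases j <;> simp [veroneseExponent]

def veroneseNormal : Set (Fin 6 →₀ ℕ) :=
  {m | m 0 + m 1 ≤ 1 ∧ m 4 ≤ 1 ∧ (m 0 = 1 → m 4 = 0 ∧ m 5 = 0)}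

lemma linearCombination_veroneseExponent (m : Fin 6 →₀ ℕ) :
    Finsupp.linearCombination ℕ veroneseExponent m 0 = m 0 + 2 * m 3 + m 4 ∧
    Finsupp.linearCombination ℕ veroneseExponent m 1 = m 1 + m 4 + 2 * m 5 ∧
    Finsupp.linearCombination ℕ veroneseExponent m 2 = m 0 + m 1 + 2 * m 2 := by
  simp [Finsupp.linearCombination_apply, Finsupp.sum_fintype, Fin.sum_univ_six, veroneseExponent]
  omega

lemma injOn_veroneseNormal :
    veroneseNormal.InjOn (Finsupp.linearCombination ℕ veroneseExponent) := by
  intro m ⟨hm₁, hm₂, hm₃⟩ n ⟨hn₁, hn₂, hn₃⟩ h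
  obtain ⟨hm0, hm1, hm2⟩ := linearCombination_veroneseExponent m
  obtain ⟨hn0, hn1, hn2⟩ := linearCombination_veroneseExponent n
  have h0 := DFunLike.congr_fun h 0
  have h1 := DFunLike.congr_fun h 1
  have h2 := DFunLike.congr_fun h 2
  ext i; fin_cases i <;> simp <;> omega

/-- Each of the six rewriting rules `x₁² → x₃u₀`, `x₂² → x₃u₂`, `x₁x₂ → x₃u₁`, `u₁² → u₀u₂`,
`x₁u₁ → x₂u₀`, `x₁u₂ → x₂u₁` lowers this weight. -/
def reductionWeight (m : Fin 6 →₀ ℕ) : ℕ := 7 * m 0 + 4 * m 1 + m 4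

open Finsupp in
lemma exists_reduction_of_notMem_veroneseNormal {m : Fin 6 →₀ ℕ} (hm : m ∉ veroneseNormal) :
    ∃ m', monomial m 1 - monomial m' 1 ∈ IB ∧ reductionWeight m' < reductionWeight m := by
  have gen p (hp : p ∈ _) : p ∈ IB := IA_le_IB (generators_subset_IA hp)
  have hminor : X 4 * X 4 - X 3 * X 5 ∈ IB := by
    rw [← neg_sub, ← sq]
    exact neg_mem minor_mem_IB
  obtain ⟨i, j, k, l, hmem, hle, hlt⟩ : ∃ i j k l : Fin 6, X i * X j - X k * X l ∈ IB ∧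
      single i 1 + single j 1 ≤ m ∧
      reductionWeight (m - (single i 1 + single j 1) + (single k 1 + single l 1)) <
        reductionWeight m := by
    have : 2 ≤ m 0 ∨ 2 ≤ m 1 ∨ 1 ≤ m 0 ∧ 1 ≤ m 1 ∨ 2 ≤ m 4 ∨ 1 ≤ m 0 ∧ 1 ≤ m 4 ∨
        1 ≤ m 0 ∧ 1 ≤ m 5 := by
      simp only [veroneseNormal, Set.mem_ofPred_eq] at hm
      omega
    rcases this with h | h | h | h | h | h <;> [
      refine ⟨0, 0, 2, 3, by rw [← sq]; exact gen _ (by simp), ?_, ?_⟩;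
      refine ⟨1, 1, 2, 5, by rw [← sq]; exact gen _ (by simp), ?_, ?_⟩;
      refine ⟨0, 1, 2, 4, gen _ (by simp), ?_, ?_⟩;
      refine ⟨4, 4, 3, 5, hminor, ?_, ?_⟩;
      refine ⟨0, 4, 1, 3, gen _ (by simp), ?_, ?_⟩;
      refine ⟨0, 5, 1, 4, gen _ (by simp), ?_, ?_⟩]
    all_goals first
      | intro x; fin_cases x <;> simp <;> omega
      | simp [reductionWeight]; omega
  refine ⟨_, monomial_sub_monomial_tsub_add_mem ?_ hle, hlt⟩
  simpa only [X, monomial_mul, mul_one] using hmem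

lemma ker_veroneseMap : RingHom.ker veroneseMap = IB :=
  ker_aeval_monomial_eq IB_le_ker_veroneseMap injOn_veroneseNormal
    (exists_normal_monomial_of_reduction reductionWeight
      fun _ hm => exists_reduction_of_notMem_veroneseNormal hm)

lemma isPrime_IB : IB.IsPrime := ker_veroneseMap ▸ RingHom.ker_isPrime _

lemma X_two_notMem_IB : X 2 ∉ IB := by
  rw [← ker_veroneseMap, RingHom.mem_ker, aeval_X]
  exact monomial_eq_zero.not.mpr one_ne_zero

lemma X_mul_minor_mem_IA {i : Fin 6} (hi : i ∈ ({0, 1, 2} : Set (Fin 6))) :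
    X i * (X 3 * X 5 - X 4 ^ 2) ∈ IA := by
  have gen p (hp : p ∈ _) : p ∈ IA := generators_subset_IA hp
  rcases hi with rfl | rfl | rfl
  · rw [show (X 0 * (X 3 * X 5 - X 4 ^ 2) : MvPolynomial (Fin 6) ℂ) =
        X 3 * (X 0 * X 5 - X 1 * X 4) - X 4 * (X 0 * X 4 - X 1 * X 3) by ring]
    exact sub_mem (IA.mul_mem_left _ (gen _ (by simp))) (IA.mul_mem_left _ (gen _ (by simp)))
  · rw [show (X 1 * (X 3 * X 5 - X 4 ^ 2) : MvPolynomial (Fin 6) ℂ) =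
        X 4 * (X 0 * X 5 - X 1 * X 4) - X 5 * (X 0 * X 4 - X 1 * X 3) by ring]
    exact sub_mem (IA.mul_mem_left _ (gen _ (by simp))) (IA.mul_mem_left _ (gen _ (by simp)))
  · rw [show (X 2 * (X 3 * X 5 - X 4 ^ 2) : MvPolynomial (Fin 6) ℂ) =
        X 4 * (X 0 * X 1 - X 2 * X 4) - X 5 * (X 0 ^ 2 - X 2 * X 3) +
          X 0 * (X 0 * X 5 - X 1 * X 4) by ring]
    exact add_mem (sub_mem (IA.mul_mem_left _ (gen _ (by simp)))
      (IA.mul_mem_left _ (gen _ (by simp)))) (IA.mul_mem_left _ (gen _ (by simp)))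

lemma IP_le_or_IB_le {p : Ideal (MvPolynomial (Fin 6) ℂ)} (hp : p.IsPrime) (hIA : IA ≤ p) :
    IP ≤ p ∨ IB ≤ p := by
  by_cases hminor : X 3 * X 5 - X 4 ^ 2 ∈ p
  · exact Or.inr (sup_le hIA (Ideal.span_le.mpr (by simpa using hminor)))
  · refine Or.inl (Ideal.span_le.mpr fun q hq => ?_)
    obtain ⟨i, hi, rfl⟩ : ∃ i ∈ ({0, 1, 2} : Set (Fin 6)), q = X i := by simpa using hq
    exact (hp.mem_or_mem (hIA (X_mul_minor_mem_IA hi))).resolve_right hminor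

/-- The prime ideals of `R` minimal over `I_A` are exactly `P = (x₁,x₂,x₃)` and
`I_B = I_A + (u₀u₂ − u₁²)`; in particular `A = R/I_A` has exactly two minimal primes. -/
theorem stmt5 :
    IA.minimalPrimes =
      {Ideal.span {X 0, X 1, X 2},
       IA ⊔ Ideal.span {X 3 * X 5 - X 4 ^ 2}} :=
  Ideal.minimalPrimes_eq_pair isPrime_IP isPrime_IB IA_le_IP IA_le_IB
    (fun h => X_two_notMem_IB (h (Ideal.subset_span (by simp))))
    (fun h => minor_notMem_IP (h minor_mem_IB))
    fun _ hp hIA => IP_le_or_IB_le hp hIA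
end

section
/- Let n ≥ 2 be an integer, R = ℂ[x₁,…,xₙ] the polynomial ring, and J ⊂ R the ideal J = (x₃,…,xₙ) + (x₁,x₂)², i.e. the ideal generated by x₁², x₁x₂, x₂², x₃, …, xₙ. Then for every integer ℓ ≥ 1, the quotient R/J^ℓ is a finite-dimensional ℂ-vector space of dimension 3·C(n+ℓ−1, n) + C(n+ℓ−2, n), where C(a,b) denotes the binomial coefficient. -/
/-!
Give an exponent `d` the weight `w(d) = d₃ + ⋯ + dₙ + ⌊(d₁ + d₂)/2⌋`. It is superadditive and every
generator of `J` has weight `1`, so `J^ℓ` only contains monomials of weight `≥ ℓ`; conversely `x^d`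
is `x₃^d₃ ⋯ xₙ^dₙ ∈ J^(d₃ + ⋯ + dₙ)` times `x₁^d₁ x₂^d₂ ∈ (x₁, x₂)^(d₁ + d₂) ⊆ J^⌊(d₁ + d₂)/2⌋`.
So `J^ℓ` is spanned by the monomials of weight `≥ ℓ`, and those of weight `< ℓ` form a basis of
`R/J^ℓ`. Writing `dᵢ = 2aᵢ + εᵢ` for `i = 1, 2`, the condition `w(d) < ℓ` becomes
`a₁ + a₂ + d₃ + ⋯ + dₙ + ⌊(ε₁ + ε₂)/2⌋ < ℓ`: the three parity classes `ε ≠ (1, 1)` contribute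
`C(n+ℓ−1, n)` monomials each and the class `ε = (1, 1)` contributes `C(n+ℓ−2, n)`.
-/

open MvPolynomial

/-- The ideal `J = (x₃,…,xₙ) + (x₁,x₂)²` of `R = ℂ[x₁,…,xₙ]`, i.e. the ideal generated by
`x₁², x₁x₂, x₂², x₃, …, xₙ`. Variables: `xₖ = X ⟨k-1⟩` for `k = 1, …, n`. -/
noncomputable def Jid (n : ℕ) : Ideal (MvPolynomial (Fin n) ℂ) :=
  Ideal.span {p | ∃ k : Fin n, 2 ≤ (k : ℕ) ∧ p = X k} ⊔
    (Ideal.span {p | ∃ k : Fin n, (k : ℕ) < 2 ∧ p = X k}) ^ 2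

open scoped Pointwise

namespace MvPolynomial

variable {σ R : Type*}

section CommSemiring

variable [CommSemiring R]

theorem restrictSupportIdeal_mul_le {s t u : Set (σ →₀ ℕ)} (hs : IsUpperSet s)
    (ht : IsUpperSet t) (hu : IsUpperSet u) (hstu : s + t ⊆ u) :
    restrictSupportIdeal R s hs * restrictSupportIdeal R t ht ≤ restrictSupportIdeal R u hu := by
  refine Ideal.mul_le.2 fun a ha b hb => restrictSupport_mono R hstu ?_
  rw [restrictSupport_add]
  exact Submodule.mul_mem_mul ha hb

theorem monomial_one_mem_span_X_pow {s : Set σ} {e : σ →₀ ℕ} (he : ↑e.support ⊆ s) :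
    monomial e (1 : R) ∈ Ideal.span (X '' s) ^ e.degree := by
  rw [monomial_eq, C_1, one_mul, Finsupp.prod, Finsupp.degree_apply,
    ← Finset.prod_pow_eq_pow_sum]
  exact Ideal.prod_mem_prod fun k hk =>
    Ideal.pow_mem_pow (Ideal.subset_span (Set.mem_image_of_mem X (he hk))) _

theorem isCompl_restrictSupport_compl (s : Set (σ →₀ ℕ)) :
    IsCompl (restrictSupport R s) (restrictSupport R sᶜ) := by
  constructor
  · rw [Submodule.disjoint_def]
    intro p hs hsc
    rw [← support_eq_empty, ← Finset.coe_eq_empty, ← Set.subset_empty_iff,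
      ← Set.inter_compl_self s]
    exact Set.subset_inter hs hsc
  · rw [codisjoint_iff, restrictSupport_eq_span, restrictSupport_eq_span, ← Submodule.span_union,
      ← Set.image_union, Set.union_compl_self, ← restrictSupport_eq_span, restrictSupport_univ]

end CommSemiring

section CommRing

variable [CommRing R]

noncomputable def quotientEquivRestrictSupportCompl {I : Ideal (MvPolynomial σ R)}
    {s : Set (σ →₀ ℕ)} (hI : I.restrictScalars R = restrictSupport R s) :
    (MvPolynomial σ R ⧸ I) ≃ₗ[R] restrictSupport R sᶜ :=
  (Submodule.Quotient.restrictScalarsEquiv R I).symm ≪≫ₗ Submodule.quotEquivOfEq _ _ hI ≪≫ₗ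
    Submodule.quotientEquivOfIsCompl _ _ (isCompl_restrictSupport_compl s)

theorem finite_quotient_of_restrictScalars_eq {I : Ideal (MvPolynomial σ R)}
    {s : Set (σ →₀ ℕ)} (hI : I.restrictScalars R = restrictSupport R s) [Finite ↥sᶜ] :
    Module.Finite R (MvPolynomial σ R ⧸ I) :=
  have := Module.Finite.of_basis (basisRestrictSupport R sᶜ)
  Module.Finite.equiv (quotientEquivRestrictSupportCompl hI).symm

theorem finrank_quotient_of_restrictScalars_eq [Nontrivial R] {I : Ideal (MvPolynomial σ R)}
    {s : Set (σ →₀ ℕ)} (hI : I.restrictScalars R = restrictSupport R s) :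
    Module.finrank R (MvPolynomial σ R ⧸ I) = Nat.card ↥sᶜ := by
  rw [(quotientEquivRestrictSupportCompl hI).finrank_eq,
    Module.finrank_eq_nat_card_basis (basisRestrictSupport R sᶜ)]

end CommRing

end MvPolynomial

namespace FatPoint

variable {σ : Type*} (R : Type*) [CommSemiring R] (p : σ → Prop) [DecidablePred p]

noncomputable def ideal : Ideal (MvPolynomial σ R) :=
  Ideal.span (X '' {k | p k}) ⊔ Ideal.span (X '' {k | ¬p k}) ^ 2

variable {R}

/-- `monomial d 1 ∈ ideal R p ^ ℓ` exactly when `ℓ ≤ weight p d` (`restrictScalars_ideal_pow`). -/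
noncomputable def weight (d : σ →₀ ℕ) : ℕ :=
  (d.filter p).degree + (d.filter (¬p ·)).degree / 2

theorem weight_add_le (d e : σ →₀ ℕ) : weight p d + weight p e ≤ weight p (d + e) := by
  simp only [weight, Finsupp.filter_add, map_add]
  omega

theorem isUpperSet_le_weight (ℓ : ℕ) : IsUpperSet {d : σ →₀ ℕ | ℓ ≤ weight p d} := by
  intro d e hde hd
  obtain ⟨c, rfl⟩ := exists_add_of_le hde
  exact hd.trans ((Nat.le_add_right _ _).trans (weight_add_le p d c))

variable (R) in
noncomputable def weightIdeal (ℓ : ℕ) : Ideal (MvPolynomial σ R) :=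
  restrictSupportIdeal R {d | ℓ ≤ weight p d} (isUpperSet_le_weight p ℓ)

theorem monomial_one_mem_weightIdeal {ℓ : ℕ} {d : σ →₀ ℕ} (h : ℓ ≤ weight p d) :
    monomial d (1 : R) ∈ weightIdeal R p ℓ :=
  (monomial_mem_restrictSupport (R := R)).2 (.inl h)

theorem weightIdeal_mul_le (a b : ℕ) :
    weightIdeal R p a * weightIdeal R p b ≤ weightIdeal R p (a + b) := by
  refine restrictSupportIdeal_mul_le _ _ _ ?_
  rintro _ ⟨d, hd, e, he, rfl⟩
  exact (add_le_add hd he).trans (weight_add_le p d e)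

theorem ideal_le_weightIdeal_one : ideal R p ≤ weightIdeal R p 1 := by
  refine sup_le (Ideal.span_le.2 ?_) ?_
  · rintro _ ⟨k, hk : p k, rfl⟩
    refine monomial_one_mem_weightIdeal p ?_
    simp [weight, Finsupp.filter_single_of_pos p hk,
      Finsupp.filter_single_of_neg (¬p ·) (not_not_intro hk)]
  · rw [sq, Ideal.span_mul_span', Ideal.span_le]
    rintro _ ⟨_, ⟨i, hi : ¬p i, rfl⟩, _, ⟨j, hj : ¬p j, rfl⟩, rfl⟩
    show X i * X j ∈ weightIdeal R p 1
    rw [X, X, monomial_mul, one_mul]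
    refine monomial_one_mem_weightIdeal p ?_
    simp [weight, Finsupp.filter_single_of_neg p, Finsupp.filter_single_of_pos (¬p ·), hi, hj]

theorem ideal_pow_le_weightIdeal (ℓ : ℕ) : ideal R p ^ ℓ ≤ weightIdeal R p ℓ := by
  induction ℓ with
  | zero => intro x _; simp [weightIdeal, restrictSupportIdeal]
  | succ ℓ ih =>
    rw [pow_succ]
    exact (Ideal.mul_mono ih (ideal_le_weightIdeal_one p)).trans (weightIdeal_mul_le p ℓ 1)

theorem monomial_one_mem_ideal_pow_weight (d : σ →₀ ℕ) :
    monomial d (1 : R) ∈ ideal R p ^ weight p d := by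
  have hsplit : monomial d (1 : R) = monomial (d.filter p) 1 * monomial (d.filter (¬p ·)) 1 := by
    rw [monomial_mul, one_mul, d.filter_add_filter_not p]
  have hlin : monomial (d.filter p) (1 : R) ∈ ideal R p ^ (d.filter p).degree := by
    refine Ideal.pow_right_mono le_sup_left _ (monomial_one_mem_span_X_pow ?_)
    simp [Finsupp.support_filter]
  have hquad :
      monomial (d.filter (¬p ·)) (1 : R) ∈ ideal R p ^ ((d.filter (¬p ·)).degree / 2) := by
    refine Ideal.pow_right_mono le_sup_right _ ?_
    rw [← pow_mul]
    refine Ideal.pow_le_pow_right (Nat.mul_div_le _ 2) (monomial_one_mem_span_X_pow ?_)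
    simp [Finsupp.support_filter]
  rw [hsplit, weight, pow_add]
  exact Ideal.mul_mem_mul hlin hquad

theorem restrictScalars_ideal_pow (ℓ : ℕ) :
    (ideal R p ^ ℓ).restrictScalars R = restrictSupport R {d | ℓ ≤ weight p d} := by
  refine le_antisymm (fun x hx => ideal_pow_le_weightIdeal p ℓ hx) ?_
  rw [restrictSupport_eq_span, Submodule.span_le]
  rintro _ ⟨d, hd, rfl⟩
  exact Ideal.pow_le_pow_right hd (monomial_one_mem_ideal_pow_weight p d)

end FatPoint

theorem finite_sum_add_lt (k c ℓ : ℕ) : Finite {q : Fin k → ℕ // ∑ i, q i + c < ℓ} :=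
  Finite.of_injective
    (fun q i => (⟨q.1 i, ((Finset.single_le_sum (fun _ _ => Nat.zero_le _)
      (Finset.mem_univ i)).trans (Nat.le_add_right _ c)).trans_lt q.2⟩ : Fin ℓ))
    fun _ _ h => Subtype.ext (funext fun i => congrArg Fin.val (congrFun h i))

def sumLtSuccEquiv (k L : ℕ) :
    {q : Fin k → ℕ // ∑ i, q i < L + 1} ≃ {q : Fin (k + 1) → ℕ // ∑ i, q i = L} where
  toFun q := ⟨Fin.cons (L - ∑ i, q.1 i) q.1, by rw [Fin.sum_cons]; have := q.2; omega⟩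
  invFun q := ⟨Fin.tail q.1, by
    have := q.2
    rw [Fin.sum_univ_succ] at this
    simp only [Fin.tail]
    omega⟩
  left_inv q := by ext; simp
  right_inv q := by
    have hhead : L - ∑ i, Fin.tail q.1 i = q.1 0 := by
      have := q.2
      rw [Fin.sum_univ_succ] at this
      simp only [Fin.tail]
      omega
    exact Subtype.ext (by simp only [hhead, Fin.cons_self_tail])

theorem natCard_sum_lt_succ (k L : ℕ) :
    Nat.card {q : Fin k → ℕ // ∑ i, q i < L + 1} = (k + L).choose k := by
  rw [Nat.card_congr ((sumLtSuccEquiv k L).trans (Sym.equivNatSumOfFintype (Fin (k + 1)) L).symm),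
    Nat.card_eq_fintype_card, Sym.card_sym_eq_choose, Fintype.card_fin,
    show k + 1 + L - 1 = k + L by omega, Nat.choose_symm_add]

-- For `ℓ ≤ c` both sides vanish, the right one through truncated subtraction.
theorem natCard_sum_add_lt {k : ℕ} (hk : 0 < k) (c ℓ : ℕ) :
    Nat.card {q : Fin k → ℕ // ∑ i, q i + c < ℓ} = (k + ℓ - 1 - c).choose k := by
  rcases le_or_gt ℓ c with h | h
  · have : IsEmpty {q : Fin k → ℕ // ∑ i, q i + c < ℓ} := ⟨fun q => by have := q.2; omega⟩
    rw [Nat.card_of_isEmpty, Nat.choose_eq_zero_of_lt (by omega)]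
  · obtain ⟨L, rfl⟩ : ∃ L, ℓ = c + L + 1 := ⟨ℓ - c - 1, by omega⟩
    rw [Nat.card_congr (Equiv.subtypeEquivRight (q := fun q : Fin k → ℕ => ∑ i, q i < L + 1)
      fun q => by omega), natCard_sum_lt_succ]
    congr 1
    omega

/-- Halves the first two coordinates, recording their parities. -/
def headParityEquiv (m : ℕ) : (Fin (m + 2) → ℕ) ≃ (Fin 2 × Fin 2) × (Fin (m + 2) → ℕ) where
  toFun f := ((Fin.ofNat 2 (f 0), Fin.ofNat 2 (f 1)),
    Fin.cons (f 0 / 2) (Fin.cons (f 1 / 2) fun i => f i.succ.succ))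
  invFun x := Fin.cons (2 * x.2 0 + x.1.1) (Fin.cons (2 * x.2 1 + x.1.2) fun i => x.2 i.succ.succ)
  left_inv f := by
    funext i
    refine Fin.cases ?_ (fun i => Fin.cases ?_ (fun i => ?_) i) i <;>
      simp only [Fin.cons_zero, Fin.cons_one, Fin.cons_succ, Fin.succ_zero_eq_one,
        Fin.ofNat_eq_cast, Fin.val_natCast] <;>
      omega
  right_inv x := by
    obtain ⟨⟨a, b⟩, q⟩ := x
    have := a.isLt
    have := b.isLt
    refine Prod.ext (Prod.ext (Fin.ext ?_) (Fin.ext ?_)) (funext fun i => ?_)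
    · simp only [Fin.cons_zero, Fin.ofNat_eq_cast, Fin.val_natCast]
      omega
    · simp only [Fin.cons_zero, Fin.cons_one, Fin.ofNat_eq_cast, Fin.val_natCast]
      omega
    · refine Fin.cases ?_ (fun i => Fin.cases ?_ (fun i => ?_) i) i <;>
        simp only [Fin.cons_zero, Fin.cons_one, Fin.cons_succ, Fin.succ_zero_eq_one] <;>
        omega

theorem sum_headParityEquiv (m : ℕ) (f : Fin (m + 2) → ℕ) :
    ∑ i, (headParityEquiv m f).2 i +
        ((headParityEquiv m f).1.1 + (headParityEquiv m f).1.2 : ℕ) / 2 =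
      ∑ i : Fin m, f i.succ.succ + (f 0 + f 1) / 2 := by
  simp only [headParityEquiv, Equiv.coe_fn_mk, Fin.sum_univ_succ, Fin.cons_zero, Fin.cons_succ,
    Fin.ofNat_eq_cast, Fin.val_natCast]
  omega

abbrev linearVar (n : ℕ) (k : Fin n) : Prop := 2 ≤ (k : ℕ)

theorem Jid_eq_fatPointIdeal (n : ℕ) : Jid n = FatPoint.ideal ℂ (linearVar n) := by
  simp only [Jid, FatPoint.ideal, linearVar, not_le]
  congr <;> ext <;> simp [eq_comm]

namespace FatPoint

theorem weight_linearVar {m : ℕ} (d : Fin (m + 2) →₀ ℕ) :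
    weight (linearVar (m + 2)) d = ∑ i : Fin m, d i.succ.succ + (d 0 + d 1) / 2 := by
  simp [weight, Finsupp.degree_eq_sum, Finsupp.filter_apply, Fin.sum_univ_succ]

noncomputable def weightLtEquiv (m ℓ : ℕ) :
    {d : Fin (m + 2) →₀ ℕ // weight (linearVar (m + 2)) d < ℓ} ≃
      Σ r : Fin 2 × Fin 2, {q : Fin (m + 2) → ℕ // ∑ i, q i + ((r.1 : ℕ) + r.2) / 2 < ℓ} :=
  (Equiv.subtypeEquiv (q := fun x => ∑ i, x.2 i + ((x.1.1 : ℕ) + x.1.2) / 2 < ℓ)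
    (Finsupp.equivFunOnFinite.trans (headParityEquiv m)) fun d => by
      have := sum_headParityEquiv m d
      rw [weight_linearVar]
      change _ ↔ ∑ i, (headParityEquiv m d).2 i +
        (((headParityEquiv m d).1.1 : ℕ) + (headParityEquiv m d).1.2) / 2 < ℓ
      omega).trans
  (Equiv.subtypeProdEquivSigmaSubtype fun (r : Fin 2 × Fin 2) (q : Fin (m + 2) → ℕ) =>
    ∑ i, q i + ((r.1 : ℕ) + r.2) / 2 < ℓ)

theorem finite_weight_lt (m ℓ : ℕ) :
    Finite {d : Fin (m + 2) →₀ ℕ // weight (linearVar (m + 2)) d < ℓ} :=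
  have := fun r : Fin 2 × Fin 2 => finite_sum_add_lt (m + 2) (((r.1 : ℕ) + r.2) / 2) ℓ
  Finite.of_equiv _ (weightLtEquiv m ℓ).symm

theorem natCard_weight_lt (m ℓ : ℕ) :
    Nat.card {d : Fin (m + 2) →₀ ℕ // weight (linearVar (m + 2)) d < ℓ} =
      3 * (m + 2 + ℓ - 1).choose (m + 2) + (m + 2 + ℓ - 2).choose (m + 2) := by
  have := fun r : Fin 2 × Fin 2 => finite_sum_add_lt (m + 2) (((r.1 : ℕ) + r.2) / 2) ℓ
  rw [Nat.card_congr (weightLtEquiv m ℓ), Nat.card_sigma]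
  simp only [Fintype.sum_prod_type, Fin.sum_univ_two, natCard_sum_add_lt (by omega : 0 < m + 2),
    Fin.val_zero, Fin.val_one]
  norm_num [show m + 2 + ℓ - 2 = m + ℓ by omega]
  ring

end FatPoint

theorem stmt7_general (n : ℕ) (hn : 2 ≤ n) (ℓ : ℕ) :
    FiniteDimensional ℂ (MvPolynomial (Fin n) ℂ ⧸ Jid n ^ ℓ) ∧
      Module.finrank ℂ (MvPolynomial (Fin n) ℂ ⧸ Jid n ^ ℓ) =
        3 * (n + ℓ - 1).choose n + (n + ℓ - 2).choose n := by
  obtain ⟨m, rfl⟩ := Nat.exists_eq_add_of_le' hn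
  have hI := FatPoint.restrictScalars_ideal_pow (R := ℂ) (linearVar (m + 2)) ℓ
  rw [← Jid_eq_fatPointIdeal] at hI
  have hcompl : ↥{d | ℓ ≤ FatPoint.weight (linearVar (m + 2)) d}ᶜ ≃
      {d // FatPoint.weight (linearVar (m + 2)) d < ℓ} :=
    Equiv.subtypeEquivRight fun _ => by simp
  have := FatPoint.finite_weight_lt m ℓ
  have := Finite.of_equiv _ hcompl.symm
  exact ⟨finite_quotient_of_restrictScalars_eq hI,
    (finrank_quotient_of_restrictScalars_eq hI).trans
      ((Nat.card_congr hcompl).trans (FatPoint.natCard_weight_lt m ℓ))⟩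

/-- For `n ≥ 2` and every `ℓ ≥ 1`, the quotient `R/J^ℓ` is a finite-dimensional
`ℂ`-vector space of dimension `3·C(n+ℓ−1, n) + C(n+ℓ−2, n)`. -/
theorem stmt7 (n : ℕ) (hn : 2 ≤ n) (ℓ : ℕ) (hℓ : 1 ≤ ℓ) :
    FiniteDimensional ℂ (MvPolynomial (Fin n) ℂ ⧸ Jid n ^ ℓ) ∧
      Module.finrank ℂ (MvPolynomial (Fin n) ℂ ⧸ Jid n ^ ℓ) =
        3 * (n + ℓ - 1).choose n + (n + ℓ - 2).choose n :=
  stmt7_general n hn ℓ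
end

section
/- Let n ≥ 2 be an integer, R = ℂ[x₁,…,xₙ] the polynomial ring, and J ⊂ R the ideal J = (x₃,…,xₙ) + (x₁,x₂)², i.e. the ideal generated by x₁², x₁x₂, x₂², x₃, …, xₙ. Then for every integer i ≥ 0, the quotient J^i/J^{i+1} is a finite-dimensional ℂ-vector space of dimension 3·C(n+i−1, n−1) + C(n+i−2, n−1), where C(a,b) denotes the binomial coefficient (with C(a,b) = 0 when a < b). -/
open MvPolynomial

/-- The `ℂ`-vector space `J^i/J^{i+1}`, realized as the quotient of the `ℂ`-submodule `J^i`
of `R` by the `ℂ`-submodule `J^{i+1}` (pulled back along the inclusion `J^i ⊆ R`). -/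
noncomputable abbrev JGraded (n i : ℕ) :=
  (Submodule.restrictScalars ℂ (Jid n ^ i : Ideal (MvPolynomial (Fin n) ℂ))) ⧸
    Submodule.comap
      (Submodule.restrictScalars ℂ (Jid n ^ i : Ideal (MvPolynomial (Fin n) ℂ))).subtype
      (Submodule.restrictScalars ℂ (Jid n ^ (i + 1) : Ideal (MvPolynomial (Fin n) ℂ)))

/-!
Give `x₁, x₂` weight one and `x₃, …, xₙ` weight two. A monomial of weight at least two is
divisible by `xₖ` for some `k ≥ 3` or by a product `xₖxₗ` with `k, l ≤ 2`, i.e. by a monomial of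
weight exactly two lying in `J`. Hence `J^i` is spanned by the monomials of weight at least `2i`,
and `J^i/J^{i+1}` has a basis of the monomials of weight `2i` or `2i+1`. Halving the exponents
of `x₁, x₂` and recording their parities `r ∈ {0,1}²` turns a monomial of weight `w` into a pair
`(e, r)` with `w = 2 deg e + r₁ + r₂`; so the monomials in question are the `(e, r)` with
`deg e = i`, `r ≠ (1,1)`, and those with `deg e = i - 1`, `r = (1,1)`, and there are
`C(n+i−1, n−1)` monomials of degree `i` in `n` variables.
-/

open Finsupp
open scoped Pointwise

namespace Finsupp

variable {σ : Type*}

lemma monotone_weight (w : σ → ℕ) : Monotone (weight w : (σ →₀ ℕ) →+ ℕ) := by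
  intro d e hde
  obtain ⟨c, rfl⟩ := le_iff_exists_add.1 hde
  simp

lemma exists_single_le_of_weight_ne_zero {w : σ → ℕ} {d : σ →₀ ℕ} (hd : weight w d ≠ 0) :
    ∃ k, single k 1 ≤ d := by
  obtain ⟨k, hk⟩ : d.support.Nonempty := by
    rw [Finset.nonempty_iff_ne_empty, Ne, support_eq_empty]
    rintro rfl
    simp at hd
  exact ⟨k, single_le_iff.2 (Nat.one_le_iff_ne_zero.2 (mem_support_iff.1 hk))⟩

variable {w : σ → ℕ} (hw : ∀ k, w k = 1 ∨ w k = 2)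
include hw

lemma exists_single_le_or_single_add_single_le {d : σ →₀ ℕ} (hd : 2 ≤ weight w d) :
    (∃ k, w k = 2 ∧ single k 1 ≤ d) ∨ ∃ k l, w k = 1 ∧ w l = 1 ∧ single k 1 + single l 1 ≤ d := by
  obtain ⟨k, hkd⟩ := exists_single_le_of_weight_ne_zero (w := w) (by omega : weight w d ≠ 0)
  rcases hw k with hk | hk
  · have hdk : d k ≠ 0 := by have := single_le_iff.1 hkd; omega
    have hrest := weight_sub_single_add (w := w) hdk
    obtain ⟨l, hld⟩ := exists_single_le_of_weight_ne_zero (w := w) (d := d - single k 1) (by omega)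
    rcases hw l with hl | hl
    · exact .inr ⟨k, l, hk, hl, (le_tsub_iff_left hkd).1 hld⟩
    · exact .inl ⟨l, hl, hld.trans tsub_le_self⟩
  · exact .inl ⟨k, hk, hkd⟩

lemma exists_le_weight_eq_two {d : σ →₀ ℕ} (hd : 2 ≤ weight w d) : ∃ g ≤ d, weight w g = 2 := by
  rcases exists_single_le_or_single_add_single_le hw hd with ⟨k, hk, hkd⟩ | ⟨k, l, hk, hl, hkld⟩
  · exact ⟨_, hkd, by simp [weight_single, hk]⟩
  · exact ⟨_, hkld, by simp [weight_single, hk, hl]⟩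

lemma setOf_add_two_le_weight (m : ℕ) :
    {d : σ →₀ ℕ | m + 2 ≤ weight w d} = {d | 2 ≤ weight w d} + {d | m ≤ weight w d} := by
  ext d
  constructor
  · intro hd
    obtain ⟨g, hgd, hg⟩ := exists_le_weight_eq_two hw (le_trans (by omega) hd : 2 ≤ weight w d)
    obtain ⟨c, rfl⟩ := le_iff_exists_add.1 hgd
    simp only [Set.mem_ofPred_eq, map_add] at hd
    exact Set.add_mem_add (by simp [hg]) (by simp only [Set.mem_ofPred_eq]; omega)
  · rintro ⟨g, hg, c, hc, rfl⟩
    simp only [Set.mem_ofPred_eq, map_add] at hg hc ⊢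
    omega

lemma setOf_two_mul_le_weight {i : ℕ} (hi : i ≠ 0) :
    {d : σ →₀ ℕ | 2 * i ≤ weight w d} = i • {d | 2 ≤ weight w d} := by
  induction i with
  | zero => contradiction
  | succ i ih =>
    rcases eq_or_ne i 0 with rfl | hi
    · simp
    rw [succ_nsmul', ← ih hi, ← setOf_add_two_le_weight hw]
    ring_nf

end Finsupp

namespace MvPolynomial

variable (R : Type*) {σ : Type*} [CommSemiring R]

noncomputable def weightGeIdeal (w : σ → ℕ) (m : ℕ) : Ideal (MvPolynomial σ R) :=
  restrictSupportIdeal R {d | m ≤ weight w d}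
    ((isUpperSet_Ici m).preimage (Finsupp.monotone_weight w))

variable {R} {w : σ → ℕ}

lemma restrictScalars_weightGeIdeal (m : ℕ) :
    (weightGeIdeal R w m).restrictScalars R = restrictSupport R {d | m ≤ weight w d} :=
  restrictScalars_restrictSupportIdeal ..

lemma X_mem_weightGeIdeal (k : σ) : (X k : MvPolynomial σ R) ∈ weightGeIdeal R w (w k) := by
  rw [← Submodule.restrictScalars_mem R, restrictScalars_weightGeIdeal, X]
  simp [weight_single]

lemma weightGeIdeal_mul_le (a b : ℕ) :
    weightGeIdeal R w a * weightGeIdeal R w b ≤ weightGeIdeal R w (a + b) := by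
  rw [← Submodule.restrictScalars_le (S := R), Ideal.restrictScalars_mul,
    restrictScalars_weightGeIdeal, restrictScalars_weightGeIdeal, restrictScalars_weightGeIdeal,
    ← restrictSupport_add]
  refine restrictSupport_mono R ?_
  rintro _ ⟨d, hd, e, he, rfl⟩
  simp only [Set.mem_ofPred_eq, map_add] at hd he ⊢
  omega

lemma weightGeIdeal_two_mul (hw : ∀ k, w k = 1 ∨ w k = 2) (i : ℕ) :
    weightGeIdeal R w (2 * i) = weightGeIdeal R w 2 ^ i := by
  rcases eq_or_ne i 0 with rfl | hi
  · rw [pow_zero, Ideal.one_eq_top, eq_top_iff, ← Submodule.restrictScalars_le (S := R)]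
    simp [restrictScalars_weightGeIdeal]
  apply Submodule.restrictScalars_injective R
  rw [Submodule.restrictScalars_pow hi, restrictScalars_weightGeIdeal,
    restrictScalars_weightGeIdeal, ← restrictSupport_nsmul, setOf_two_mul_le_weight hw hi]

end MvPolynomial

def jWeight (n : ℕ) (k : Fin n) : ℕ := if (k : ℕ) < 2 then 1 else 2

lemma jWeight_eq_one_or_two {n : ℕ} (k : Fin n) : jWeight n k = 1 ∨ jWeight n k = 2 := by
  unfold jWeight; split_ifs <;> simp

lemma jWeight_eq_one_iff {n : ℕ} {k : Fin n} : jWeight n k = 1 ↔ (k : ℕ) < 2 := by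
  unfold jWeight; split_ifs <;> simp [*]

lemma jWeight_eq_two_iff {n : ℕ} {k : Fin n} : jWeight n k = 2 ↔ 2 ≤ (k : ℕ) := by
  unfold jWeight; split_ifs <;> simp <;> omega

lemma Jid_eq_weightGeIdeal (n : ℕ) : Jid n = weightGeIdeal ℂ (jWeight n) 2 := by
  apply le_antisymm
  · refine sup_le (Ideal.span_le.2 ?_) ?_
    · rintro _ ⟨k, hk, rfl⟩
      simpa [jWeight_eq_two_iff.2 hk] using X_mem_weightGeIdeal (R := ℂ) (w := jWeight n) k
    · have h : Ideal.span {p | ∃ k : Fin n, (k : ℕ) < 2 ∧ p = X k} ≤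
          weightGeIdeal ℂ (jWeight n) 1 := by
        refine Ideal.span_le.2 ?_
        rintro _ ⟨k, hk, rfl⟩
        simpa [jWeight_eq_one_iff.2 hk] using X_mem_weightGeIdeal (R := ℂ) (w := jWeight n) k
      exact (pow_le_pow_left' h 2).trans ((pow_two _).trans_le (weightGeIdeal_mul_le 1 1))
  · rw [← Submodule.restrictScalars_le (S := ℂ), restrictScalars_weightGeIdeal,
      restrictSupport_eq_span, Submodule.span_le]
    rintro _ ⟨d, hd, rfl⟩
    rw [SetLike.mem_coe, Submodule.restrictScalars_mem]
    dsimp only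
    rcases exists_single_le_or_single_add_single_le jWeight_eq_one_or_two hd with
      ⟨k, hk, hkd⟩ | ⟨k, l, hk, hl, hkld⟩
    · obtain ⟨c, rfl⟩ := le_iff_exists_add.1 hkd
      rw [monomial_single_add, pow_one]
      exact Ideal.mul_mem_right _ _
        (Ideal.mem_sup_left (Ideal.subset_span ⟨k, jWeight_eq_two_iff.1 hk, rfl⟩))
    · obtain ⟨c, rfl⟩ := le_iff_exists_add.1 hkld
      rw [add_assoc, monomial_single_add, monomial_single_add, pow_one, pow_one, ← mul_assoc]
      refine Ideal.mul_mem_right _ _ (Ideal.mem_sup_right ?_)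
      rw [pow_two]
      exact Ideal.mul_mem_mul (Ideal.subset_span ⟨k, jWeight_eq_one_iff.1 hk, rfl⟩)
        (Ideal.subset_span ⟨l, jWeight_eq_one_iff.1 hl, rfl⟩)

lemma restrictScalars_Jid_pow (n i : ℕ) :
    (Jid n ^ i).restrictScalars ℂ = restrictSupport ℂ {d | 2 * i ≤ weight (jWeight n) d} := by
  rw [Jid_eq_weightGeIdeal, ← weightGeIdeal_two_mul jWeight_eq_one_or_two,
    restrictScalars_weightGeIdeal]

namespace MvPolynomial

variable {R σ : Type*} [CommRing R] {s t : Set (σ →₀ ℕ)}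

variable (R s t) in
noncomputable def restrictSupportCoeffs : restrictSupport R s →ₗ[R] (↥(s \ t) → R) :=
  LinearMap.pi fun d => (lcoeff R d.1).comp (restrictSupport R s).subtype

@[simp]
lemma restrictSupportCoeffs_apply (p : restrictSupport R s) (d : ↥(s \ t)) :
    restrictSupportCoeffs R s t p d = coeff d.1 p.1 :=
  rfl

lemma ker_restrictSupportCoeffs :
    LinearMap.ker (restrictSupportCoeffs R s t) =
      (restrictSupport R t).comap (restrictSupport R s).subtype := by
  ext ⟨p, hp⟩
  rw [LinearMap.mem_ker, _root_.funext_iff]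
  simp only [Submodule.mem_comap, Submodule.subtype_apply, mem_restrictSupport_iff,
    restrictSupportCoeffs_apply, Pi.zero_apply, Subtype.forall, Set.mem_sdiff]
  constructor
  · intro h d hd
    by_contra hdt
    exact mem_support_iff.1 hd (h d ⟨hp hd, hdt⟩)
  · intro h d ⟨_, hdt⟩
    exact notMem_support_iff.1 fun hd => hdt (h hd)

lemma surjective_restrictSupportCoeffs [Finite ↥(s \ t)] :
    Function.Surjective (restrictSupportCoeffs R s t) := by
  classical
  cases nonempty_fintype ↥(s \ t)
  intro f
  refine ⟨⟨∑ d, monomial d.1 (f d), Submodule.sum_mem _ fun d _ => ?_⟩, ?_⟩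
  · simp [d.2.1]
  · funext e
    rw [restrictSupportCoeffs_apply, coeff_sum]
    simp only [coeff_monomial]
    rw [Finset.sum_eq_single e (fun d _ hde => if_neg (Subtype.coe_injective.ne hde)) (by simp),
      if_pos rfl]

noncomputable def restrictSupportQuotEquiv [Finite ↥(s \ t)] :
    (restrictSupport R s ⧸ (restrictSupport R t).comap (restrictSupport R s).subtype) ≃ₗ[R]
      (↥(s \ t) → R) :=
  (Submodule.quotEquivOfEq _ _ ker_restrictSupportCoeffs.symm).trans
    ((restrictSupportCoeffs R s t).quotKerEquivOfSurjective surjective_restrictSupportCoeffs)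

end MvPolynomial

namespace Finsupp

variable {σ : Type*} [Fintype σ]

lemma card_degree_eq (j : ℕ) :
    Nat.card {e : σ →₀ ℕ // e.degree = j} = (Fintype.card σ + j - 1).choose j := by
  classical
  rw [← Finset.card_univ, ← Finset.card_finsuppAntidiag_nat_eq_choose, ← Nat.card_eq_finsetCard]
  exact Nat.card_congr (Equiv.subtypeEquivRight fun e => by
    simp [Finset.mem_finsuppAntidiag, degree_eq_sum])

lemma card_degree_add_one_eq (hσ : 2 ≤ Fintype.card σ) (i : ℕ) :
    Nat.card {e : σ →₀ ℕ // e.degree + 1 = i} =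
      (Fintype.card σ + i - 2).choose (Fintype.card σ - 1) := by
  cases i with
  | zero =>
    have : IsEmpty {e : σ →₀ ℕ // e.degree + 1 = 0} := ⟨fun e => by have := e.2; omega⟩
    rw [Nat.card_of_isEmpty, Nat.choose_eq_zero_of_lt]
    omega
  | succ j =>
    rw [Nat.card_congr (Equiv.subtypeEquivRight fun e => Nat.succ_inj), card_degree_eq,
      Nat.choose_symm_of_eq_add (show _ = j + (Fintype.card σ - 1) by omega)]
    congr 1

instance finite_degree_add_eq (c i : ℕ) : Finite {e : σ →₀ ℕ // e.degree + c = i} :=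
  ((finite_of_degree_le i).subset fun e (he : e.degree + c = i) => by
    simp only [Set.mem_ofPred_eq]; omega).to_subtype

variable [DecidableEq σ] {a b : σ}

noncomputable def halveTwoEquiv (hab : a ≠ b) : (σ →₀ ℕ) ≃ (Fin 2 × Fin 2) × (σ →₀ ℕ) where
  toFun d := ((Fin.ofNat 2 (d a), Fin.ofNat 2 (d b)), (d.update a (d a / 2)).update b (d b / 2))
  invFun p := (p.2.update a (2 * p.2 a + p.1.1)).update b (2 * p.2 b + p.1.2)
  left_inv d := by
    ext k
    simp only [update_apply, if_neg hab.symm, Fin.val_ofNat]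
    split_ifs <;> subst_vars <;> omega
  right_inv := by
    rintro ⟨⟨r, r'⟩, e⟩
    simp only [update_apply, if_neg hab.symm, if_neg hab, Prod.mk.injEq, if_true]
    refine ⟨⟨?_, ?_⟩, ?_⟩
    · ext; simp; omega
    · ext; simp; omega
    · ext k; simp only [update_apply]; split_ifs <;> subst_vars <;> omega

lemma weight_halveTwoEquiv_symm {w : σ → ℕ} (hab : a ≠ b) (ha : w a = 1) (hb : w b = 1)
    (hw : ∀ k, k ≠ a → k ≠ b → w k = 2) (r : Fin 2 × Fin 2) (e : σ →₀ ℕ) :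
    weight w ((halveTwoEquiv hab).symm (r, e)) = 2 * e.degree + r.1 + r.2 := by
  have hk : ∀ k, ((halveTwoEquiv hab).symm (r, e)) k * w k =
      2 * e k + (if k = a then (r.1 : ℕ) else 0) + (if k = b then (r.2 : ℕ) else 0) := by
    intro k
    simp only [halveTwoEquiv, Equiv.coe_fn_symm_mk, update_apply]
    by_cases hka : k = a
    · subst hka; simp [hab, ha]
    by_cases hkb : k = b
    · subst hkb; simp [hka, hb]
    simp [hka, hkb, hw k hka hkb, mul_comm]
  simp only [weight_eq_sum, smul_eq_mul, hk, Finset.sum_add_distrib, Finset.sum_ite_eq',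
    Finset.mem_univ, if_true, ← Finset.mul_sum, degree_eq_sum]

lemma card_weight_div_two_eq {w : σ → ℕ} (hab : a ≠ b) (ha : w a = 1) (hb : w b = 1)
    (hw : ∀ k, k ≠ a → k ≠ b → w k = 2) (i : ℕ) :
    Nat.card {d : σ →₀ ℕ // weight w d / 2 = i} =
      3 * Nat.card {e : σ →₀ ℕ // e.degree = i} + Nat.card {e : σ →₀ ℕ // e.degree + 1 = i} :=
  calc Nat.card {d : σ →₀ ℕ // weight w d / 2 = i}
      = Nat.card {p : (Fin 2 × Fin 2) × (σ →₀ ℕ) // p.2.degree + (p.1.1 + p.1.2 : ℕ) / 2 = i} :=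
        Nat.card_congr ((halveTwoEquiv hab).symm.subtypeEquiv fun ⟨r, e⟩ => by
          rw [weight_halveTwoEquiv_symm hab ha hb hw]; dsimp only; omega).symm
    _ = ∑ r : Fin 2 × Fin 2, Nat.card {e : σ →₀ ℕ // e.degree + (r.1 + r.2 : ℕ) / 2 = i} := by
        rw [Nat.card_congr (Equiv.subtypeProdEquivSigmaSubtype
          fun (r : Fin 2 × Fin 2) (e : σ →₀ ℕ) => e.degree + (r.1 + r.2 : ℕ) / 2 = i),
          Nat.card_sigma]
    _ = _ := by
        simp [Fintype.sum_prod_type, Fin.sum_univ_two]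
        ring

end Finsupp

lemma card_jWeight_div_two_eq {n : ℕ} (hn : 2 ≤ n) (i : ℕ) :
    Nat.card {d : Fin n →₀ ℕ // weight (jWeight n) d / 2 = i} =
      3 * (n + i - 1).choose (n - 1) + (n + i - 2).choose (n - 1) := by
  have h01 : (⟨0, by omega⟩ : Fin n) ≠ ⟨1, by omega⟩ := by simp
  rw [card_weight_div_two_eq h01 (by simp [jWeight]) (by simp [jWeight])
      (fun k hk0 hk1 => jWeight_eq_two_iff.2 (by simp [Fin.ext_iff] at hk0 hk1; omega)),
    card_degree_eq, card_degree_add_one_eq (by simpa using hn), Fintype.card_fin,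
    Nat.choose_symm_of_eq_add (show n + i - 1 = i + (n - 1) by omega)]

/-- For `n ≥ 2` and every `i ≥ 0`, `J^i/J^{i+1}` is a finite-dimensional `ℂ`-vector space
of dimension `3·C(n+i−1, n−1) + C(n+i−2, n−1)` (with `C(a,b) = 0` when `a < b`). -/
theorem stmt8 (n : ℕ) (hn : 2 ≤ n) (i : ℕ) :
    FiniteDimensional ℂ (JGraded n i) ∧
      Module.finrank ℂ (JGraded n i) =
        3 * (n + i - 1).choose (n - 1) + (n + i - 2).choose (n - 1) := by
  set s := {d : Fin n →₀ ℕ | 2 * i ≤ weight (jWeight n) d}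
  set t := {d : Fin n →₀ ℕ | 2 * (i + 1) ≤ weight (jWeight n) d}
  have hslice : s \ t = {d | weight (jWeight n) d / 2 = i} := by
    ext d
    simp only [s, t, Set.mem_sdiff, Set.mem_ofPred_eq]
    omega
  have hcard : Nat.card ↥(s \ t) = 3 * (n + i - 1).choose (n - 1) + (n + i - 2).choose (n - 1) := by
    rw [hslice]
    exact card_jWeight_div_two_eq hn i
  have : Finite ↥(s \ t) := Nat.finite_of_card_ne_zero (by
    have := Nat.choose_pos (show n - 1 ≤ n + i - 1 by omega)
    omega)
  have E : JGraded n i ≃ₗ[ℂ] (↥(s \ t) → ℂ) := by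
    unfold JGraded
    rw [restrictScalars_Jid_pow, restrictScalars_Jid_pow]
    exact restrictSupportQuotEquiv
  have := Fintype.ofFinite ↥(s \ t)
  exact ⟨Module.Finite.equiv E.symm,
    by rw [E.finrank_eq, Module.finrank_pi, ← Nat.card_eq_fintype_card, hcard]⟩
end

section
/- Let n ≥ 3 and consider the polynomial ring ℂ[x₁,…,xₙ,u₁,…,uₙ] and the ideal generated by: x₁u₁−x₂, x₁u₂−x₂u₁, and, for all 3 ≤ i, j ≤ n, the elements x₁²uᵢ−xᵢ, x₁x₂uᵢ−xᵢu₁, x₂²uᵢ−xᵢu₂ and xᵢuⱼ−xⱼuᵢ. Then the quotient ring is isomorphic as a ℂ-algebra to the polynomial ring in the n−2 variables u₃,…,uₙ over the ring ℂ[x₁,x₂,u₁,u₂]/(x₁u₁−x₂, x₁u₂−x₂u₁). -/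
open MvPolynomial

/-!
Substituting `xᵢ = x₁²uᵢ` for `i ≥ 3` eliminates the variables `xᵢ`. After the substitution
`x₁x₂uᵢ - xᵢu₁ = x₁uᵢ(x₂ - x₁u₁)`, `x₂²uᵢ - xᵢu₂ = uᵢ(x₂² - x₁²u₂)` with
`x₂² - x₁²u₂ = x₂(x₂ - x₁u₁) + x₁(x₂u₁ - x₁u₂)`, and `xᵢuⱼ - xⱼuᵢ = 0`, so only the two relations
among `x₁, x₂, u₁, u₂` survive and `u₃, …, uₙ` become free.
-/

noncomputable section

namespace PunctualFiber

variable (R : Type*) [CommRing R]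

/-- The variables `X 0, X 1, X 2, X 3` stand for `x₁, x₂, u₁, u₂`. -/
def coreIdeal : Ideal (MvPolynomial (Fin 4) R) :=
  Ideal.span {X 0 * X 2 - X 1, X 0 * X 3 - X 1 * X 2}

abbrev CoreRing : Type _ := MvPolynomial (Fin 4) R ⧸ coreIdeal R

def coreVar (k : Fin 4) : CoreRing R := Ideal.Quotient.mk _ (X k)

lemma coreVar_zero_mul_two : coreVar R 0 * coreVar R 2 = coreVar R 1 := by
  rw [coreVar, coreVar, coreVar, ← map_mul, Ideal.Quotient.mk_eq_mk_iff_sub_mem]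
  exact Ideal.subset_span (by simp)

lemma coreVar_zero_mul_three : coreVar R 0 * coreVar R 3 = coreVar R 1 * coreVar R 2 := by
  rw [coreVar, coreVar, coreVar, coreVar, ← map_mul, ← map_mul,
    Ideal.Quotient.mk_eq_mk_iff_sub_mem]
  exact Ideal.subset_span (by simp)

variable (n : ℕ)

def fiberGenerators (hn : 2 ≤ n) : Set (MvPolynomial (Fin n ⊕ Fin n) R) :=
  {X (Sum.inl ⟨0, by omega⟩) * X (Sum.inr ⟨0, by omega⟩) - X (Sum.inl ⟨1, by omega⟩),
      X (Sum.inl ⟨0, by omega⟩) * X (Sum.inr ⟨1, by omega⟩) -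
        X (Sum.inl ⟨1, by omega⟩) * X (Sum.inr ⟨0, by omega⟩)} ∪
    {p | ∃ i : Fin n, 2 ≤ (i : ℕ) ∧
       p = X (Sum.inl ⟨0, by omega⟩) ^ 2 * X (Sum.inr i) - X (Sum.inl i)} ∪
    {p | ∃ i : Fin n, 2 ≤ (i : ℕ) ∧
       p = X (Sum.inl ⟨0, by omega⟩) * X (Sum.inl ⟨1, by omega⟩) * X (Sum.inr i) -
         X (Sum.inl i) * X (Sum.inr ⟨0, by omega⟩)} ∪
    {p | ∃ i : Fin n, 2 ≤ (i : ℕ) ∧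
       p = X (Sum.inl ⟨1, by omega⟩) ^ 2 * X (Sum.inr i) -
         X (Sum.inl i) * X (Sum.inr ⟨1, by omega⟩)} ∪
    {p | ∃ i j : Fin n, 2 ≤ (i : ℕ) ∧ 2 ≤ (j : ℕ) ∧
       p = X (Sum.inl i) * X (Sum.inr j) - X (Sum.inl j) * X (Sum.inr i)}

abbrev FiberRing (hn : 2 ≤ n) : Type _ :=
  MvPolynomial (Fin n ⊕ Fin n) R ⧸ Ideal.span (fiberGenerators R n hn)

def fiberVal : Fin n ⊕ Fin n → MvPolynomial (Fin (n - 2)) (CoreRing R)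
  | .inl i =>
    if h : 2 ≤ (i : ℕ) then C (coreVar R 0) ^ 2 * X ⟨i - 2, by omega⟩
    else C (coreVar R ⟨i, by omega⟩)
  | .inr i =>
    if h : 2 ≤ (i : ℕ) then X ⟨i - 2, by omega⟩
    else C (coreVar R ⟨i + 2, by omega⟩)

@[simp] lemma fiberVal_inl_of_lt {k : ℕ} (hk : k < n) (h : k < 2) :
    fiberVal R n (.inl ⟨k, hk⟩) = C (coreVar R ⟨k, by omega⟩) := by
  simp [fiberVal, Nat.not_le.mpr h]

@[simp] lemma fiberVal_inl_of_le {i : Fin n} (h : 2 ≤ (i : ℕ)) :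
    fiberVal R n (.inl i) = C (coreVar R 0) ^ 2 * X ⟨i - 2, by omega⟩ := by
  simp [fiberVal, h]

@[simp] lemma fiberVal_inr_of_lt {k : ℕ} (hk : k < n) (h : k < 2) :
    fiberVal R n (.inr ⟨k, hk⟩) = C (coreVar R ⟨k + 2, by omega⟩) := by
  simp [fiberVal, Nat.not_le.mpr h]

@[simp] lemma fiberVal_inr_of_le {i : Fin n} (h : 2 ≤ (i : ℕ)) :
    fiberVal R n (.inr i) = X ⟨i - 2, by omega⟩ := by
  simp [fiberVal, h]

@[simp] lemma fiberVal_inl_zero (h : 0 < n) : fiberVal R n (.inl ⟨0, h⟩) = C (coreVar R 0) :=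
  fiberVal_inl_of_lt R n h two_pos

@[simp] lemma fiberVal_inl_one (h : 1 < n) : fiberVal R n (.inl ⟨1, h⟩) = C (coreVar R 1) :=
  fiberVal_inl_of_lt R n h one_lt_two

@[simp] lemma fiberVal_inr_zero (h : 0 < n) : fiberVal R n (.inr ⟨0, h⟩) = C (coreVar R 2) :=
  fiberVal_inr_of_lt R n h two_pos

@[simp] lemma fiberVal_inr_one (h : 1 < n) : fiberVal R n (.inr ⟨1, h⟩) = C (coreVar R 3) :=
  fiberVal_inr_of_lt R n h one_lt_two

variable {n} (hn : 2 ≤ n)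

lemma aeval_fiberVal_of_mem_fiberGenerators {p : MvPolynomial (Fin n ⊕ Fin n) R}
    (hp : p ∈ fiberGenerators R n hn) : aeval (fiberVal R n) p = 0 := by
  have h₀₂ : (C (coreVar R 0) * C (coreVar R 2) : MvPolynomial (Fin (n - 2)) _) =
      C (coreVar R 1) := by rw [← map_mul, coreVar_zero_mul_two]
  have h₀₃ : (C (coreVar R 0) * C (coreVar R 3) : MvPolynomial (Fin (n - 2)) _) =
      C (coreVar R 1) * C (coreVar R 2) := by rw [← map_mul, ← map_mul, coreVar_zero_mul_three]
  simp only [fiberGenerators, Set.mem_union, Set.mem_insert_iff, Set.mem_singleton_iff,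
    Set.mem_ofPred_eq] at hp
  rcases hp with ((((rfl | rfl) | ⟨i, hi, rfl⟩) | ⟨i, hi, rfl⟩) | ⟨i, hi, rfl⟩) |
      ⟨i, j, hi, hj, rfl⟩ <;>
    simp only [map_sub, map_mul, map_pow, aeval_X, fiberVal_inl_zero, fiberVal_inl_one,
      fiberVal_inr_zero, fiberVal_inr_one]
  · linear_combination h₀₂
  · linear_combination h₀₃
  · rw [fiberVal_inl_of_le R n hi, fiberVal_inr_of_le R n hi, sub_self]
  · rw [fiberVal_inl_of_le R n hi, fiberVal_inr_of_le R n hi]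
    linear_combination (-C (coreVar R 0) * X ⟨i - 2, by omega⟩) * h₀₂
  · rw [fiberVal_inl_of_le R n hi, fiberVal_inr_of_le R n hi]
    linear_combination (-C (coreVar R 0) * X ⟨i - 2, by omega⟩) * h₀₃ -
      (C (coreVar R 1) * X ⟨i - 2, by omega⟩) * h₀₂
  · rw [fiberVal_inl_of_le R n hi, fiberVal_inr_of_le R n hi, fiberVal_inl_of_le R n hj,
      fiberVal_inr_of_le R n hj]
    ring

def toPoly : FiberRing R n hn →ₐ[R] MvPolynomial (Fin (n - 2)) (CoreRing R) :=
  Ideal.Quotient.liftₐ _ (aeval (fiberVal R n)) fun _ hp => RingHom.mem_ker.mp <|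
    (Ideal.span_le (I := RingHom.ker (aeval (fiberVal R n)))).mpr
      (fun _ hq => aeval_fiberVal_of_mem_fiberGenerators R hn hq) hp

@[simp] lemma toPoly_mk (p : MvPolynomial (Fin n ⊕ Fin n) R) :
    toPoly R hn (Ideal.Quotient.mk _ p) = aeval (fiberVal R n) p :=
  Ideal.Quotient.lift_mk _ _ _

lemma mk_X_inl_zero_pow_mul (i : Fin n) (hi : 2 ≤ (i : ℕ)) :
    (Ideal.Quotient.mk _ (X (.inl ⟨0, by omega⟩)) ^ 2 * Ideal.Quotient.mk _ (X (.inr i)) :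
      FiberRing R n hn) = Ideal.Quotient.mk _ (X (.inl i)) := by
  rw [← map_pow, ← map_mul, Ideal.Quotient.mk_eq_mk_iff_sub_mem]
  exact Ideal.subset_span (.inl (.inl (.inl (.inr ⟨i, hi, rfl⟩))))

def coreLift (k : Fin 4) : MvPolynomial (Fin n ⊕ Fin n) R :=
  if h : (k : ℕ) < 2 then X (.inl ⟨k, by omega⟩) else X (.inr ⟨k - 2, by omega⟩)

lemma coreIdeal_le_ker :
    coreIdeal R ≤ RingHom.ker ((Ideal.Quotient.mkₐ R (Ideal.span (fiberGenerators R n hn))).comp (aeval (coreLift R hn))) := by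
  refine Ideal.span_le.mpr ?_
  rintro _ (rfl | rfl) <;>
  · rw [SetLike.mem_coe, RingHom.mem_ker, AlgHom.comp_apply, Ideal.Quotient.mkₐ_eq_mk,
      Ideal.Quotient.eq_zero_iff_mem]
    refine Ideal.subset_span (.inl (.inl (.inl (.inl ?_))))
    simp [coreLift]

def coreToFiber : CoreRing R →ₐ[R] FiberRing R n hn :=
  Ideal.Quotient.liftₐ _ _ fun _ hp => RingHom.mem_ker.mp (coreIdeal_le_ker R hn hp)

def ofPoly : MvPolynomial (Fin (n - 2)) (CoreRing R) →ₐ[R] FiberRing R n hn :=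
  aevalTower (coreToFiber R hn) fun m => Ideal.Quotient.mk _ (X (.inr ⟨m + 2, by omega⟩))

@[simp] lemma ofPoly_C_coreVar (k : Fin 4) :
    ofPoly R hn (C (coreVar R k)) = Ideal.Quotient.mk _ (coreLift R hn k) := by
  rw [ofPoly, aevalTower_C, ← aeval_X (R := R) (coreLift R hn) k]
  rfl

@[simp] lemma ofPoly_X (m : Fin (n - 2)) :
    ofPoly R hn (X m) = Ideal.Quotient.mk _ (X (.inr ⟨m + 2, by omega⟩)) :=
  aevalTower_X _ _ _

lemma ofPoly_fiberVal (s : Fin n ⊕ Fin n) :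
    ofPoly R hn (fiberVal R n s) = Ideal.Quotient.mk _ (X s) := by
  rcases s with ⟨k, hk⟩ | ⟨k, hk⟩ <;> by_cases h : 2 ≤ k
  · rw [fiberVal_inl_of_le R n h, map_mul, map_pow, ofPoly_C_coreVar, ofPoly_X, coreLift,
      dif_pos (by decide)]
    simp only [Nat.sub_add_cancel h]
    exact mk_X_inl_zero_pow_mul R hn ⟨k, hk⟩ h
  · rw [fiberVal_inl_of_lt R n hk (by omega), ofPoly_C_coreVar, coreLift,
      dif_pos (show k < 2 by omega)]
  · rw [fiberVal_inr_of_le R n h, ofPoly_X]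
    simp only [Nat.sub_add_cancel h]
  · rw [fiberVal_inr_of_lt R n hk (by omega), ofPoly_C_coreVar, coreLift,
      dif_neg (show ¬k + 2 < 2 by omega)]
    simp only [Nat.add_sub_cancel]

lemma toPoly_mk_coreLift (k : Fin 4) :
    toPoly R hn (Ideal.Quotient.mk _ (coreLift R hn k)) = C (coreVar R k) := by
  fin_cases k <;> simp [coreLift]

lemma ofPoly_comp_toPoly : (ofPoly R hn).comp (toPoly R hn) = AlgHom.id R _ := by
  refine Ideal.Quotient.algHom_ext _ (MvPolynomial.algHom_ext fun s => ?_)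
  simp [ofPoly_fiberVal]

lemma toPoly_comp_ofPoly : (toPoly R hn).comp (ofPoly R hn) = AlgHom.id R _ := by
  refine MvPolynomial.algHom_ext' (Ideal.Quotient.algHom_ext _
    (MvPolynomial.algHom_ext fun k => ?_)) fun m => ?_
  · change toPoly R hn (ofPoly R hn (C (coreVar R k))) = C (coreVar R k)
    rw [ofPoly_C_coreVar, toPoly_mk_coreLift]
  · simp

def fiberRingEquiv : FiberRing R n hn ≃ₐ[R] MvPolynomial (Fin (n - 2)) (CoreRing R) :=
  .ofAlgHom (toPoly R hn) (ofPoly R hn) (toPoly_comp_ofPoly R hn) (ofPoly_comp_toPoly R hn)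

end PunctualFiber

/-- Let `n ≥ 3`. In `ℂ[x₁,…,xₙ,u₁,…,uₙ]` (with `xₖ = X (Sum.inl ⟨k-1⟩)` and
`uₖ = X (Sum.inr ⟨k-1⟩)`), the quotient by the ideal generated by
`x₁u₁−x₂`, `x₁u₂−x₂u₁`, and, for all `3 ≤ i, j ≤ n`, the elements
`x₁²uᵢ−xᵢ`, `x₁x₂uᵢ−xᵢu₁`, `x₂²uᵢ−xᵢu₂` and `xᵢuⱼ−xⱼuᵢ`, is isomorphic as a
`ℂ`-algebra to the polynomial ring in `n−2` variables over
`ℂ[x₁,x₂,u₁,u₂]/(x₁u₁−x₂, x₁u₂−x₂u₁)`. -/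
theorem stmt10 (n : ℕ) (hn : 3 ≤ n) :
    Nonempty
      ((MvPolynomial (Fin n ⊕ Fin n) ℂ ⧸
          Ideal.span
            (({X (Sum.inl ⟨0, by omega⟩) * X (Sum.inr ⟨0, by omega⟩) - X (Sum.inl ⟨1, by omega⟩),
               X (Sum.inl ⟨0, by omega⟩) * X (Sum.inr ⟨1, by omega⟩) -
                 X (Sum.inl ⟨1, by omega⟩) * X (Sum.inr ⟨0, by omega⟩)} ∪
              {p | ∃ i : Fin n, 2 ≤ (i : ℕ) ∧
                 p = X (Sum.inl ⟨0, by omega⟩) ^ 2 * X (Sum.inr i) - X (Sum.inl i)} ∪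
              {p | ∃ i : Fin n, 2 ≤ (i : ℕ) ∧
                 p = X (Sum.inl ⟨0, by omega⟩) * X (Sum.inl ⟨1, by omega⟩) * X (Sum.inr i) -
                   X (Sum.inl i) * X (Sum.inr ⟨0, by omega⟩)} ∪
              {p | ∃ i : Fin n, 2 ≤ (i : ℕ) ∧
                 p = X (Sum.inl ⟨1, by omega⟩) ^ 2 * X (Sum.inr i) -
                   X (Sum.inl i) * X (Sum.inr ⟨1, by omega⟩)} ∪
              {p | ∃ i j : Fin n, 2 ≤ (i : ℕ) ∧ 2 ≤ (j : ℕ) ∧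
                 p = X (Sum.inl i) * X (Sum.inr j) - X (Sum.inl j) * X (Sum.inr i)} :
              Set (MvPolynomial (Fin n ⊕ Fin n) ℂ)))) ≃ₐ[ℂ]
        MvPolynomial (Fin (n - 2))
          (MvPolynomial (Fin 4) ℂ ⧸
            Ideal.span {(X 0 * X 2 - X 1 : MvPolynomial (Fin 4) ℂ),
              X 0 * X 3 - X 1 * X 2})) :=
  ⟨PunctualFiber.fiberRingEquiv ℂ (by omega : 2 ≤ n)⟩
end
end
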